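/- arXiv:2303.14276 — 4 statements merged into one kernel-verified Lean document; each statement's English description precedes it below -/
import Mathlib

section
/- Let K ≥ 1, let n_1,…,n_K be positive integers, let A ∈ (0,1), and for each μ set Q(μ) = (⌊A·n_μ⌋ + 1)/n_μ. Let p_1,…,p_K ∈ (0,1) satisfy p_μ < Q(μ) < 1 for every μ. Define the probability of failure δ = 1 − ∏_{μ=1}^{K} ∑_{k=0}^{⌊A·n_μ⌋} C(n_μ,k) · p_μ^k · (1 − p_μ)^{n_μ − k}. Then 1 − ∏_{μ=1}^{K} [1 − exp(−n_μ · D(Q(μ)‖p_μ)) / √(8 · n_μ · Q(μ) · (1 − Q(μ)))] ≤ δ ≤ 1 − ∏_{μ=1}^{K} [1 − exp(−n_μ · D(Q(μ)‖p_μ))]. -/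
open Finset

/-- Kullback–Leibler divergence between Bernoulli(q) and Bernoulli(p). -/
noncomputable def KL (q p : ℝ) : ℝ :=
  q * Real.log (q / p) + (1 - q) * Real.log ((1 - q) / (1 - p))

/-!
In committee `μ` put `k = ⌊A n⌋ + 1` and `Q = k / n`; the committee fails when `Bin(n, p) ≥ k`.
Changing measure from `Bin(n, p)` to `Bin(n, Q)` multiplies the mass at `j` by
`(p / Q) ^ j ((1 - p) / (1 - Q)) ^ (n - j)`, which is non-increasing in `j` (as `p < Q`) and
equals `exp (-n D(Q‖p))` at `j = k`. Hence the failure probability is at most `exp (-n D(Q‖p))`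
(Chernoff), and at least the mass at `k`, which is `exp (-n D(Q‖p))` times the `Bin(n, Q)` mass at
its mean `k`. Stirling's formula with Robbins' error bound shows that this central mass is at
least `1 / √(8 n Q (1 - Q))`. The committees are independent, so the bounds multiply.
-/

open Filter Real Nat Topology Stirling

theorem stirlingSeq_le_sqrt_pi_mul_exp {n : ℕ} (hn : n ≠ 0) :
    stirlingSeq n ≤ √π * exp (1 / (12 * n)) := by
  obtain ⟨m, rfl⟩ := exists_eq_succ_of_ne_zero hn
  -- Robbins' bound makes `log (stirlingSeq j) - 1 / (12 j)` increasing; its limit is `log √π`.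
  set f : ℕ → ℝ := fun j ↦ log (stirlingSeq (j + 1)) - 1 / (12 * (j + 1))
  have hf : Monotone f := monotone_nat_of_le_succ fun j ↦ by
    have robbins := log_stirlingSeq_sdiff_le (j + 1)
    have : (1 : ℝ) / (12 * (j + 1)) - 1 / (12 * (j + 1 + 1)) =
        1 / (12 * (j + 1) * (j + 1 + 1)) := by field_simp; ring
    simp only [f]
    push_cast at *
    linarith
  have hlim : Tendsto f atTop (𝓝 (log √π - 0)) := by
    refine ((tendsto_stirlingSeq_sqrt_pi.comp (tendsto_add_atTop_nat 1)).log
      (by positivity)).sub ?_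
    simpa [mul_comm] using tendsto_one_div_add_atTop_nhds_zero_nat.const_mul (1 / 12 : ℝ)
  have hm := hf.ge_of_tendsto hlim m
  simp only [f, sub_zero] at hm
  rw [← exp_log (stirlingSeq'_pos m), ← exp_log (by positivity : (0 : ℝ) < √π), ← exp_add]
  exact exp_le_exp.mpr (by push_cast; linarith)

theorem factorial_le_stirling_mul_exp {n : ℕ} (hn : n ≠ 0) :
    (n ! : ℝ) ≤ √(2 * π * n) * (n / exp 1) ^ n * exp (1 / (12 * n)) := by
  have h := stirlingSeq_le_sqrt_pi_mul_exp hn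
  rw [stirlingSeq, div_le_iff₀ (by positivity)] at h
  calc (n ! : ℝ) ≤ √π * exp (1 / (12 * n)) * (√(2 * n) * (n / exp 1) ^ n) := h
    _ = _ := by rw [show (2 * π * n : ℝ) = π * (2 * n) by ring, sqrt_mul pi_pos.le]; ring

theorem pi_mul_exp_le_four {k r : ℕ} (hk : k ≠ 0) (hr : r ≠ 0) (hkr : 5 ≤ k + r) :
    π * (exp (1 / (12 * k)) * exp (1 / (12 * r))) ^ 2 ≤ 4 := by
  have hk1 : (1 : ℝ) ≤ k := by exact_mod_cast Nat.one_le_iff_ne_zero.mpr hk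
  have hr1 : (1 : ℝ) ≤ r := by exact_mod_cast Nat.one_le_iff_ne_zero.mpr hr
  have hkr' : (5 : ℝ) ≤ k + r := by exact_mod_cast hkr
  -- the worst case is `{k, r} = {1, 4}`
  have hx : (1 / (12 * k) + 1 / (12 * r) : ℝ) + (1 / (12 * k) + 1 / (12 * r)) ≤ 5 / 24 := by
    rw [show (1 / (12 * k) + 1 / (12 * r) : ℝ) + (1 / (12 * k) + 1 / (12 * r)) =
      (k + r) / (6 * k * r) by field_simp; ring, div_le_div_iff₀ (by positivity) (by norm_num)]
    nlinarith [mul_nonneg (sub_nonneg.2 hk1) (sub_nonneg.2 hr1)]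
  rw [← exp_add, sq, ← exp_add]
  calc _ ≤ (3.15 : ℝ) * (1 / (1 - 5 / 24)) := by
        gcongr
        · exact pi_lt_d2.le
        · exact (exp_le_exp.2 hx).trans
            (exp_bound_div_one_sub_of_interval (by norm_num) (by norm_num))
    _ ≤ 4 := by norm_num

theorem add_pow_le_eight_mul_choose_sq_of_five_le {k r : ℕ} (hk : k ≠ 0) (hr : r ≠ 0)
    (hkr : 5 ≤ k + r) :
    ((k + r : ℕ) : ℝ) ^ (2 * (k + r) + 1) ≤
      8 * k * r * ((k + r).choose k * k ^ k * r ^ r : ℕ) ^ 2 := by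
  set n := k + r with hn
  set c : ℝ := exp (1 / (12 * k)) * exp (1 / (12 * r))
  -- a lower bound for `C(n, k) k ^ k r ^ r` by Stirling; the powers of `e` cancel as `n = k + r`
  set x : ℝ := √(2 * π * n) * (n / exp 1) ^ n * k ^ k * r ^ r /
      ((√(2 * π * k) * (k / exp 1) ^ k * exp (1 / (12 * k))) *
        (√(2 * π * r) * (r / exp 1) ^ r * exp (1 / (12 * r)))) with hx_def
  have hchoose :
      ((n.choose k * k ^ k * r ^ r : ℕ) : ℝ) = (n ! : ℝ) * k ^ k * r ^ r / (k ! * r !) := by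
    rw [Nat.choose_eq_factorial_div_factorial (by omega), show n - k = r by omega, Nat.cast_mul,
      Nat.cast_mul,
      Nat.cast_div (Nat.factorial_mul_factorial_dvd_factorial_add k r) (by positivity)]
    push_cast; ring
  have hx : x ≤ ((n.choose k * k ^ k * r ^ r : ℕ) : ℝ) := by
    rw [hchoose, hx_def]
    gcongr
    · exact le_factorial_stirling n
    · exact factorial_le_stirling_mul_exp hk
    · exact factorial_le_stirling_mul_exp hr
  have hxsq : (n : ℝ) ^ (2 * n + 1) = 2 * π * k * r * c ^ 2 * x ^ 2 := by
    simp only [x, c, div_pow, mul_pow]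
    rw [sq_sqrt (by positivity), sq_sqrt (by positivity), sq_sqrt (by positivity)]
    field_simp
    rw [hn, pow_add (exp 1)]
    ring
  calc (n : ℝ) ^ (2 * n + 1) = 2 * k * r * (π * c ^ 2) * x ^ 2 := by rw [hxsq]; ring
    _ ≤ 2 * k * r * 4 * ((n.choose k * k ^ k * r ^ r : ℕ) : ℝ) ^ 2 := by
      gcongr
      exact pi_mul_exp_le_four hk hr hkr
    _ = _ := by ring

/-- With `n = k + r` and `Q = k / n`, this is `C(n, k) Q ^ k (1 - Q) ^ r ≥ 1 / √(8 n Q (1 - Q))`,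
squared and cleared of denominators. -/
theorem add_pow_le_eight_mul_choose_sq {k r : ℕ} (hk : k ≠ 0) (hr : r ≠ 0) :
    (k + r) ^ (2 * (k + r) + 1) ≤ 8 * k * r * ((k + r).choose k * k ^ k * r ^ r) ^ 2 := by
  by_cases hkr : 5 ≤ k + r
  · exact_mod_cast add_pow_le_eight_mul_choose_sq_of_five_le hk hr hkr
  · -- here Stirling's constant `π exp (1 / (6 k) + 1 / (6 r))` can exceed `4` (e.g. `k = r = 1`)
    have : 1 ≤ k := by omega
    have : 1 ≤ r := by omega
    have : k ≤ 3 := by omega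
    have : r ≤ 3 := by omega
    interval_cases k <;> interval_cases r <;> decide

def binomialMass (n : ℕ) (p : ℝ) (j : ℕ) : ℝ := n.choose j * p ^ j * (1 - p) ^ (n - j)

theorem binomialMass_nonneg {p : ℝ} (hp0 : 0 ≤ p) (hp1 : p ≤ 1) (n j : ℕ) :
    0 ≤ binomialMass n p j := by
  unfold binomialMass
  have := sub_nonneg.2 hp1
  positivity

theorem sum_binomialMass (n : ℕ) (p : ℝ) : ∑ j ∈ range (n + 1), binomialMass n p j = 1 := by
  simpa [binomialMass, mul_right_comm _ _ ((n.choose _ : ℝ)), mul_comm] using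
    (add_pow p (1 - p) n).symm

theorem binomialMass_eq_mul {Q : ℝ} (hQ0 : Q ≠ 0) (hQ1 : Q ≠ 1) (n : ℕ) (p : ℝ) (j : ℕ) :
    binomialMass n p j =
      binomialMass n Q j * ((p / Q) ^ j * ((1 - p) / (1 - Q)) ^ (n - j)) := by
  have : 1 - Q ≠ 0 := sub_ne_zero.2 hQ1.symm
  simp only [binomialMass, div_pow]
  field_simp

theorem one_le_binomialMass_mul_sqrt {n k : ℕ} {Q : ℝ} (hQ : Q = k / n) (hk : k ≠ 0)
    (hkn : k < n) :
    1 ≤ binomialMass n Q k * √(8 * n * Q * (1 - Q)) := by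
  obtain ⟨r, rfl⟩ := Nat.exists_eq_add_of_le hkn.le
  have hr : r ≠ 0 := by omega
  have hN : ((k + r : ℕ) : ℝ) ≠ 0 := by positivity
  have hmass : binomialMass (k + r) Q k =
      ((k + r).choose k * k ^ k * r ^ r : ℕ) / ((k + r : ℕ) : ℝ) ^ (k + r) := by
    rw [binomialMass, hQ, one_sub_div hN, Nat.add_sub_cancel_left, div_pow, div_pow]
    push_cast
    ring
  have hvar : 8 * ((k + r : ℕ) : ℝ) * Q * (1 - Q) = 8 * k * r / ((k + r : ℕ) : ℝ) := by
    rw [hQ, one_sub_div hN]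
    push_cast
    field_simp
    ring
  have key : (1 : ℝ) ≤
      (((k + r).choose k * k ^ k * r ^ r : ℕ) / ((k + r : ℕ) : ℝ) ^ (k + r)) ^ 2 *
        (8 * k * r / ((k + r : ℕ) : ℝ)) := by
    rw [div_pow, ← pow_mul', _root_.div_mul_div_comm, one_le_div (by positivity), ← pow_succ]
    calc _ ≤ ((8 * k * r * ((k + r).choose k * k ^ k * r ^ r) ^ 2 : ℕ) : ℝ) := by
          exact_mod_cast add_pow_le_eight_mul_choose_sq hk hr
      _ = _ := by push_cast; ring
  calc (1 : ℝ) ≤ √(_ ^ 2 * _) := one_le_sqrt.2 key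
    _ = _ := by rw [sqrt_mul (sq_nonneg _), sqrt_sq (by positivity), hmass, hvar]

theorem div_pow_mul_div_pow_le_of_le {p Q : ℝ} (hp : 0 < p) (hpQ : p ≤ Q) (hQ1 : Q < 1)
    {n k j : ℕ} (hkj : k ≤ j) :
    (p / Q) ^ j * ((1 - p) / (1 - Q)) ^ (n - j) ≤
      (p / Q) ^ k * ((1 - p) / (1 - Q)) ^ (n - k) := by
  have hQ0 : 0 < Q := hp.trans_le hpQ
  have h1Q : 0 < 1 - Q := sub_pos.2 hQ1
  have hratio : 1 ≤ (1 - p) / (1 - Q) := (one_le_div h1Q).2 (by linarith)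
  exact mul_le_mul (pow_le_pow_of_le_one (by positivity) ((div_le_one hQ0).2 hpQ) hkj)
    (pow_le_pow_right₀ hratio (by omega)) (pow_nonneg (zero_le_one.trans hratio) _)
    (by positivity)

/-- Chernoff's bound, proved by the change of measure from `Bin(n, p)` to `Bin(n, Q)`. -/
theorem sum_Ico_binomialMass_le {p Q : ℝ} (hp : 0 < p) (hpQ : p ≤ Q) (hQ1 : Q < 1) (n k : ℕ) :
    ∑ j ∈ Ico k (n + 1), binomialMass n p j ≤ (p / Q) ^ k * ((1 - p) / (1 - Q)) ^ (n - k) := by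
  have hQ0 : 0 < Q := hp.trans_le hpQ
  have hmass := binomialMass_nonneg hQ0.le hQ1.le n
  have hL : 0 ≤ (p / Q) ^ k * ((1 - p) / (1 - Q)) ^ (n - k) :=
    mul_nonneg (by positivity) (pow_nonneg (div_nonneg (by linarith) (by linarith)) _)
  calc ∑ j ∈ Ico k (n + 1), binomialMass n p j
      = ∑ j ∈ Ico k (n + 1),
          binomialMass n Q j * ((p / Q) ^ j * ((1 - p) / (1 - Q)) ^ (n - j)) :=
        sum_congr rfl fun j _ ↦ binomialMass_eq_mul hQ0.ne' hQ1.ne n p j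
    _ ≤ ∑ j ∈ Ico k (n + 1),
          binomialMass n Q j * ((p / Q) ^ k * ((1 - p) / (1 - Q)) ^ (n - k)) :=
        sum_le_sum fun j hj ↦ mul_le_mul_of_nonneg_left
          (div_pow_mul_div_pow_le_of_le hp hpQ hQ1 (mem_Ico.1 hj).1) (hmass j)
    _ ≤ ∑ j ∈ range (n + 1),
          binomialMass n Q j * ((p / Q) ^ k * ((1 - p) / (1 - Q)) ^ (n - k)) :=
        sum_le_sum_of_subset_of_nonneg (fun j hj ↦ mem_range.2 (mem_Ico.1 hj).2)
          fun j _ _ ↦ mul_nonneg (hmass j) hL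
    _ = (p / Q) ^ k * ((1 - p) / (1 - Q)) ^ (n - k) := by
        rw [← sum_mul, sum_binomialMass, one_mul]

theorem KL_nonneg {q p : ℝ} (hq0 : 0 ≤ q) (hq1 : q ≤ 1) (hp0 : 0 < p) (hp1 : p < 1) :
    0 ≤ KL q p := by
  have h1p : 0 < 1 - p := sub_pos.2 hp1
  have hKL : KL q p = p * InformationTheory.klFun (q / p) +
      (1 - p) * InformationTheory.klFun ((1 - q) / (1 - p)) := by
    simp only [KL, InformationTheory.klFun_apply]
    field_simp
    ring
  rw [hKL]
  exact add_nonneg (mul_nonneg hp0.le (InformationTheory.klFun_nonneg (div_nonneg hq0 hp0.le)))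
    (mul_nonneg h1p.le (InformationTheory.klFun_nonneg (div_nonneg (sub_nonneg.2 hq1) h1p.le)))

theorem exp_neg_mul_KL {n k : ℕ} {p Q : ℝ} (hp0 : 0 < p) (hp1 : p < 1) (hQ0 : 0 < Q)
    (hQ1 : Q < 1) (hnQ : n * Q = k) :
    exp (-n * KL Q p) = (p / Q) ^ k * ((1 - p) / (1 - Q)) ^ (n - k) := by
  have hkn : k ≤ n := by
    have : (k : ℝ) ≤ n := by nlinarith [(Nat.cast_nonneg n : (0 : ℝ) ≤ n)]
    exact_mod_cast this
  have hlog : -n * KL Q p = k * log (p / Q) + (n - k : ℕ) * log ((1 - p) / (1 - Q)) := by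
    have hinv (x y : ℝ) : log (x / y) = -log (y / x) := by rw [← log_inv, inv_div]
    rw [KL, Nat.cast_sub hkn, ← hnQ, hinv Q, hinv (1 - Q)]
    ring
  rw [hlog, exp_add, exp_nat_mul, exp_nat_mul, exp_log (by positivity),
    exp_log (div_pos (sub_pos.2 hp1) (sub_pos.2 hQ1))]

theorem binomial_cdf_bounds {n k : ℕ} {p Q : ℝ} (hQ : Q = k / n) (hp : 0 < p) (hpQ : p < Q)
    (hQ1 : Q < 1) :
    1 - exp (-n * KL Q p) ≤ ∑ j ∈ range k, binomialMass n p j ∧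
      ∑ j ∈ range k, binomialMass n p j ≤ 1 - exp (-n * KL Q p) / √(8 * n * Q * (1 - Q)) := by
  have hQ0 : 0 < Q := hp.trans hpQ
  have hn : (n : ℝ) ≠ 0 := fun h ↦ by simp [h] at hQ; linarith
  have hnQ : n * Q = k := by rw [hQ]; field_simp
  have hk : k ≠ 0 := by rintro rfl; simp [hn] at hnQ; linarith
  have hkn : k < n := by
    have hn0 : (0 : ℝ) < n := (Nat.cast_nonneg n).lt_of_ne' hn
    have : (k : ℝ) < n := by rw [← hnQ]; nlinarith
    exact_mod_cast this
  have hexp := exp_neg_mul_KL hp (hpQ.trans hQ1) hQ0 hQ1 hnQ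
  have hsplit :
      ∑ j ∈ range k, binomialMass n p j + ∑ j ∈ Ico k (n + 1), binomialMass n p j = 1 := by
    rw [sum_range_add_sum_Ico _ (by omega), sum_binomialMass]
  have htail_le : ∑ j ∈ Ico k (n + 1), binomialMass n p j ≤ exp (-n * KL Q p) :=
    hexp ▸ sum_Ico_binomialMass_le hp hpQ.le hQ1 n k
  have hmode : exp (-n * KL Q p) / √(8 * n * Q * (1 - Q)) ≤ binomialMass n p k := by
    have hsqrt : 0 < √(8 * n * Q * (1 - Q)) :=
      sqrt_pos.2 (mul_pos (by positivity) (sub_pos.2 hQ1))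
    have := one_le_binomialMass_mul_sqrt hQ hk hkn
    rw [binomialMass_eq_mul hQ0.ne' hQ1.ne, ← hexp, div_le_iff₀ hsqrt]
    nlinarith [exp_pos (-n * KL Q p)]
  have htail_ge : binomialMass n p k ≤ ∑ j ∈ Ico k (n + 1), binomialMass n p j :=
    single_le_sum (fun j _ ↦ binomialMass_nonneg hp.le (hpQ.trans hQ1).le n j)
      (mem_Ico.2 ⟨le_rfl, by omega⟩)
  constructor <;> linarith

theorem stmt_5_general (K : ℕ) (n : Fin K → ℕ) (A : ℝ)
    (Q : Fin K → ℝ) (hQ : ∀ μ, Q μ = ((Nat.floor (A * n μ) : ℝ) + 1) / (n μ : ℝ))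
    (p : Fin K → ℝ) (hp : ∀ μ, p μ ∈ Set.Ioo (0 : ℝ) 1)
    (hpQ : ∀ μ, p μ < Q μ) (hQ1 : ∀ μ, Q μ < 1)
    (δ : ℝ)
    (hδ : δ = 1 - ∏ μ, ∑ k ∈ Finset.range (Nat.floor (A * n μ) + 1),
        ((n μ).choose k : ℝ) * p μ ^ k * (1 - p μ) ^ (n μ - k)) :
    1 - ∏ μ, (1 - Real.exp (-(n μ : ℝ) * KL (Q μ) (p μ)) /
          Real.sqrt (8 * (n μ : ℝ) * Q μ * (1 - Q μ))) ≤ δ ∧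
    δ ≤ 1 - ∏ μ, (1 - Real.exp (-(n μ : ℝ) * KL (Q μ) (p μ))) := by
  have hbounds μ := binomial_cdf_bounds (k := ⌊A * n μ⌋₊ + 1) (by rw [hQ μ]; push_cast; rfl)
    (hp μ).1 (hpQ μ) (hQ1 μ)
  subst hδ
  constructor
  · refine sub_le_sub_left (prod_le_prod (fun μ _ ↦ ?_) fun μ _ ↦ (hbounds μ).2) 1
    exact sum_nonneg fun j _ ↦ binomialMass_nonneg (hp μ).1.le (hp μ).2.le (n μ) j
  · refine sub_le_sub_left (prod_le_prod (fun μ _ ↦ ?_) fun μ _ ↦ (hbounds μ).1) 1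
    rw [sub_nonneg, exp_le_one_iff, neg_mul, neg_nonpos]
    exact mul_nonneg (Nat.cast_nonneg _)
      (KL_nonneg ((hp μ).1.trans (hpQ μ)).le (hQ1 μ).le (hp μ).1 (hp μ).2)

/-- lower and upper bounds on the probability of failure δ for
independent binomial committees. -/
theorem stmt_5 (K : ℕ) (hK : 1 ≤ K) (n : Fin K → ℕ) (hn : ∀ μ, 1 ≤ n μ)
    (A : ℝ) (hA : A ∈ Set.Ioo (0 : ℝ) 1)
    (Q : Fin K → ℝ) (hQ : ∀ μ, Q μ = ((Nat.floor (A * n μ) : ℝ) + 1) / (n μ : ℝ))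
    (p : Fin K → ℝ) (hp : ∀ μ, p μ ∈ Set.Ioo (0 : ℝ) 1)
    (hpQ : ∀ μ, p μ < Q μ) (hQ1 : ∀ μ, Q μ < 1)
    (δ : ℝ)
    (hδ : δ = 1 - ∏ μ, ∑ k ∈ Finset.range (Nat.floor (A * n μ) + 1),
        ((n μ).choose k : ℝ) * p μ ^ k * (1 - p μ) ^ (n μ - k)) :
    1 - ∏ μ, (1 - Real.exp (-(n μ : ℝ) * KL (Q μ) (p μ)) /
          Real.sqrt (8 * (n μ : ℝ) * Q μ * (1 - Q μ))) ≤ δ ∧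
    δ ≤ 1 - ∏ μ, (1 - Real.exp (-(n μ : ℝ) * KL (Q μ) (p μ))) :=
  stmt_5_general K n A Q hQ p hp hpQ hQ1 δ hδ
end

section
/- Let L, K, N be positive integers and let p : [L] × [K] → ℝ be nonnegative with ∑_{β,ν} p(β,ν) = 1, modelling N nodes each independently assigned a (colour, committee) pair with probability p. Fix a colour α ∈ [L], set P(μ) = ∑_β p(β,μ), assume P(μ) > 0, and set q_μ = p(α,μ)/P(μ). Let A ∈ (0,1) satisfy q_μ < A for every μ. Then the probability of failure δ = ∑_{𝒜 : [N] → [L]×[K]} (∏_{i=1}^{N} p(𝒜(i))) · 1[∃μ : N^α_μ(𝒜) > A · N_μ(𝒜)] satisfies δ ≤ ∑_{μ=1}^{K} (P(μ) · exp(−D(A‖q_μ)) + 1 − P(μ))^N. -/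
open Finset

lemma scalar_key (A qv : ℝ) (hA0 : 0 < A) (hA1 : A < 1) (hq0 : 0 ≤ qv)
    (hqA : qv < A) :
    ∃ t : ℝ, 0 ≤ t ∧
      qv * Real.exp (t * (1 - A)) + (1 - qv) * Real.exp (-(t * A)) ≤ Real.exp (-KL A qv) := by
  have h1A : (0:ℝ) < 1 - A := by linarith
  rcases eq_or_lt_of_le hq0 with h0 | hq
  · refine ⟨0, le_refl 0, ?_⟩
    rw [← h0]
    have hKL : KL A 0 = (1 - A) * Real.log (1 - A) := by
      simp [KL]
    rw [hKL]
    have : (1 - A) * Real.log (1 - A) ≤ 0 :=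
      mul_nonpos_of_nonneg_of_nonpos h1A.le (Real.log_nonpos (by linarith) (by linarith))
    have h1 : (1:ℝ) ≤ Real.exp (-((1 - A) * Real.log (1 - A))) :=
      Real.one_le_exp (by linarith)
    simpa using h1
  · have h1q : (0:ℝ) < 1 - qv := by linarith
    set c : ℝ := A * (1 - qv) / ((1 - A) * qv) with hc
    have hc0 : 0 < c := by positivity
    have hc1 : 1 ≤ c := by
      rw [hc, le_div_iff₀ (by positivity)]
      nlinarith
    refine ⟨Real.log c, Real.log_nonneg hc1, le_of_eq ?_⟩
    set t : ℝ := Real.log c with ht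
    have hect : Real.exp t = c := Real.exp_log hc0
    have e1 : Real.exp (t * (1 - A)) = c * Real.exp (-(t * A)) := by
      rw [← hect, ← Real.exp_add]; ring_nf
    rw [e1]
    have hqc : qv * c = A * (1 - qv) / (1 - A) := by
      rw [hc]; field_simp
    have hlhs : qv * (c * Real.exp (-(t * A))) + (1 - qv) * Real.exp (-(t * A))
        = (1 - qv) / (1 - A) * Real.exp (-(t * A)) := by
      have : qv * c + (1 - qv) = (1 - qv) / (1 - A) := by
        rw [hqc]; field_simp; ring
      linear_combination Real.exp (-(t * A)) * this
    rw [hlhs]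
    have hfac : (1 - qv) / (1 - A) = Real.exp (Real.log (1 - qv) - Real.log (1 - A)) := by
      rw [Real.exp_sub, Real.exp_log h1q, Real.exp_log h1A]
    rw [hfac, ← Real.exp_add]
    congr 1
    have lc : Real.log c = Real.log A + Real.log (1 - qv) - (Real.log (1 - A) + Real.log qv) := by
      rw [hc, Real.log_div (by positivity) (by positivity), Real.log_mul hA0.ne' h1q.ne',
        Real.log_mul h1A.ne' hq.ne']
    have l1 : Real.log (A / qv) = Real.log A - Real.log qv := Real.log_div hA0.ne' hq.ne'
    have l2 : Real.log ((1 - A) / (1 - qv)) = Real.log (1 - A) - Real.log (1 - qv) :=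
      Real.log_div h1A.ne' h1q.ne'
    rw [ht, lc]
    rw [KL, l1, l2]
    ring

open scoped Classical in
/-- union bound on the probability of failure for fully random
partitions (random committee sizes): δ ≤ ∑_μ (P(μ)·e^{−D(A‖q_μ)} + 1 − P(μ))^N. -/
theorem stmt_6 (L K N : ℕ) (hL : 0 < L) (hK : 0 < K) (hN : 0 < N)
    (p : Fin L × Fin K → ℝ) (hp : ∀ x, 0 ≤ p x) (hsum : ∑ x, p x = 1)
    (α : Fin L) (P : Fin K → ℝ) (hP : ∀ μ, P μ = ∑ β, p (β, μ))
    (hPpos : ∀ μ, 0 < P μ)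
    (q : Fin K → ℝ) (hq : ∀ μ, q μ = p (α, μ) / P μ)
    (A : ℝ) (hA : A ∈ Set.Ioo (0 : ℝ) 1) (hqA : ∀ μ, q μ < A)
    (δ : ℝ)
    (hδ : δ = ∑ A' : Fin N → Fin L × Fin K,
        (∏ i, p (A' i)) *
          (if ∃ μ : Fin K,
              A * ((univ.filter fun i => (A' i).2 = μ).card : ℝ) <
                ((univ.filter fun i => A' i = (α, μ)).card : ℝ)
            then (1 : ℝ) else 0)) :
    δ ≤ ∑ μ, (P μ * Real.exp (-KL A (q μ)) + 1 - P μ) ^ N := by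
  classical
  obtain ⟨hA0, hA1⟩ := hA
  have hq0 : ∀ μ, 0 ≤ q μ := fun μ => by
    rw [hq]; exact div_nonneg (hp _) (hPpos μ).le
  choose t ht0 htle using fun μ => scalar_key A (q μ) hA0 hA1 (hq0 μ) (hqA μ)
  set f : Fin K → (Fin L × Fin K) → ℝ := fun μ x =>
    (if x = (α, μ) then (1:ℝ) else 0) - A * (if x.2 = μ then 1 else 0) with hf
  set g : Fin K → (Fin L × Fin K) → ℝ := fun μ x => p x * Real.exp (t μ * f μ x) with hg
  have hgnn : ∀ μ x, 0 ≤ g μ x := fun μ x => mul_nonneg (hp x) (Real.exp_pos _).le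
  have hprod_eq : ∀ (μ : Fin K) (A' : Fin N → Fin L × Fin K),
      ∏ i, g μ (A' i) = (∏ i, p (A' i)) * Real.exp (t μ * ∑ i, f μ (A' i)) := by
    intro μ A'
    rw [hg]
    simp only
    rw [Finset.prod_mul_distrib, Finset.mul_sum, Real.exp_sum]
  have hsumf : ∀ (μ : Fin K) (A' : Fin N → Fin L × Fin K),
      ∑ i, f μ (A' i) =
        ((univ.filter fun i => A' i = (α, μ)).card : ℝ)
          - A * ((univ.filter fun i => (A' i).2 = μ).card : ℝ) := by
    intro μ A'
    rw [hf]
    simp only [Finset.sum_sub_distrib, ← Finset.mul_sum, Finset.sum_boole]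
  -- Step 1: union bound + Chernoff bound on the indicator
  have step1 : δ ≤ ∑ μ, ∑ A' : Fin N → Fin L × Fin K, ∏ i, g μ (A' i) := by
    rw [hδ, Finset.sum_comm]
    apply Finset.sum_le_sum
    intro A' _
    split_ifs with h
    · obtain ⟨μ0, hμ0⟩ := h
      rw [mul_one]
      have hbig : (∏ i, p (A' i)) ≤ ∏ i, g μ0 (A' i) := by
        rw [hprod_eq, hsumf]
        nth_rewrite 1 [← mul_one (∏ i, p (A' i))]
        apply mul_le_mul_of_nonneg_left _ (Finset.prod_nonneg fun i _ => hp _)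
        exact Real.one_le_exp (mul_nonneg (ht0 μ0) (by linarith))
      exact hbig.trans
        (Finset.single_le_sum (f := fun μ => ∏ i, g μ (A' i))
          (fun μ _ => Finset.prod_nonneg fun i _ => hgnn μ _) (Finset.mem_univ μ0))
    · rw [mul_zero]
      exact Finset.sum_nonneg fun μ _ => Finset.prod_nonneg fun i _ => hgnn μ _
  refine step1.trans (Finset.sum_le_sum fun μ _ => ?_)
  -- Step 2: independence factorisation
  have step2 : ∑ A' : Fin N → Fin L × Fin K, ∏ i, g μ (A' i) = (∑ x, g μ x) ^ N := by
    rw [← Fintype.piFinset_univ, ← Finset.prod_univ_sum]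
    simp [Finset.prod_const]
  rw [step2]
  -- Step 3: compute the single-node expectation
  set E1 : ℝ := Real.exp (t μ * (1 - A)) with hE1
  set E2 : ℝ := Real.exp (-(t μ * A)) with hE2
  have hPtot : ∑ ν, P ν = 1 := by
    rw [← hsum, Fintype.sum_prod_type_right]
    exact Finset.sum_congr rfl fun ν _ => hP ν
  have hpα : ∀ ν, p (α, ν) = q ν * P ν := by
    intro ν
    rw [hq]
    exact (div_mul_cancel₀ _ (hPpos ν).ne').symm
  have step3 : ∑ x, g μ x = P μ * (q μ * E1 + (1 - q μ) * E2) + (1 - P μ) := by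
    rw [Fintype.sum_prod_type_right]
    have inner : ∀ ν : Fin K, (∑ β, g μ (β, ν)) =
        if ν = μ then P μ * (q μ * E1 + (1 - q μ) * E2) else P ν := by
      intro ν
      by_cases hν : ν = μ
      · subst hν
        rw [if_pos rfl]
        have hterm : ∀ β : Fin L, g ν (β, ν) =
            p (β, ν) * E2 + (if β = α then p (β, ν) * (E1 - E2) else 0) := by
          intro β
          rw [hg, hf]
          simp only
          by_cases hβ : β = α
          · subst hβ
            simp only [if_pos rfl, Prod.mk.injEq, and_self, ite_true]
            rw [hE1]
            ring_nf
          · have hne : (β, ν) ≠ (α, ν) := by simp [hβ]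
            simp only [if_neg hne, if_neg hβ, if_pos rfl, add_zero]
            rw [hE2]
            ring_nf
            norm_num
        simp only [hterm]
        rw [Finset.sum_add_distrib]
        rw [show (∑ β, if β = α then p (β, ν) * (E1 - E2) else 0)
            = p (α, ν) * (E1 - E2) by
          simp [Finset.sum_ite_eq']]
        rw [← Finset.sum_mul, ← hP]
        rw [hpα]
        ring
      · rw [if_neg hν]
        have hz : ∀ β : Fin L, g μ (β, ν) = p (β, ν) := by
          intro β
          rw [hg, hf]
          have h1 : (β, ν) ≠ (α, μ) := by simp [hν]
          simp [h1, hν]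
        simp only [hz]
        exact (hP ν).symm
    simp only [inner]
    have hsplit : ∀ ν : Fin K, (if ν = μ then P μ * (q μ * E1 + (1 - q μ) * E2) else P ν)
        = P ν + (if ν = μ then P μ * (q μ * E1 + (1 - q μ) * E2) - P ν else 0) := by
      intro ν
      split_ifs with h
      · subst h; ring
      · ring
    simp only [hsplit]
    rw [Finset.sum_add_distrib, hPtot]
    rw [show (∑ ν, if ν = μ then P μ * (q μ * E1 + (1 - q μ) * E2) - P ν else 0)
        = P μ * (q μ * E1 + (1 - q μ) * E2) - P μ by
      simp [Finset.sum_ite_eq']]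
    ring
  -- Step 4: conclude
  have base_nonneg : 0 ≤ ∑ x, g μ x := Finset.sum_nonneg fun x _ => hgnn μ x
  have hle : ∑ x, g μ x ≤ P μ * Real.exp (-KL A (q μ)) + 1 - P μ := by
    rw [step3]
    have h := htle μ
    rw [← hE1, ← hE2] at h
    have h2 := mul_le_mul_of_nonneg_left h (hPpos μ).le
    linarith
  exact pow_le_pow_left₀ base_nonneg hle N
end

section
/- Let L, K, N be positive integers and let p : [L] × [K] → ℝ be nonnegative with ∑_{β,ν} p(β,ν) = 1, modelling N nodes each independently assigned a (colour, committee) pair with probability p. Fix a colour α ∈ [L], set P(μ) = ∑_β p(β,μ), assume P(μ) > 0, and set q_μ = p(α,μ)/P(μ). Let A ∈ (0,1) satisfy q_μ < A for every μ. Then the probability of failure δ = ∑_{𝒜 : [N] → [L]×[K]} (∏_{i=1}^{N} p(𝒜(i))) · 1[∃μ : N^α_μ(𝒜) > A · N_μ(𝒜)] satisfies δ ≤ ∑_{μ=1}^{K} exp(−N · P(μ) · (1 − exp(−D(A‖q_μ)))). -/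
open Finset

open scoped Classical in
/-- simpler union bound on the probability of failure for fully random
partitions: δ ≤ ∑_μ exp(−N·P(μ)·(1 − e^{−D(A‖q_μ)})). -/
theorem stmt_7 (L K N : ℕ) (hL : 0 < L) (hK : 0 < K) (hN : 0 < N)
    (p : Fin L × Fin K → ℝ) (hp : ∀ x, 0 ≤ p x) (hsum : ∑ x, p x = 1)
    (α : Fin L) (P : Fin K → ℝ) (hP : ∀ μ, P μ = ∑ β, p (β, μ))
    (hPpos : ∀ μ, 0 < P μ)
    (q : Fin K → ℝ) (hq : ∀ μ, q μ = p (α, μ) / P μ)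
    (A : ℝ) (hA : A ∈ Set.Ioo (0 : ℝ) 1) (hqA : ∀ μ, q μ < A)
    (δ : ℝ)
    (hδ : δ = ∑ A' : Fin N → Fin L × Fin K,
        (∏ i, p (A' i)) *
          (if ∃ μ : Fin K,
              A * ((univ.filter fun i => (A' i).2 = μ).card : ℝ) <
                ((univ.filter fun i => A' i = (α, μ)).card : ℝ)
            then (1 : ℝ) else 0)) :
    δ ≤ ∑ μ, Real.exp (-(N : ℝ) * P μ * (1 - Real.exp (-KL A (q μ)))) := by
  obtain ⟨hA0, hA1⟩ := hA
  set I : Fin K → (Fin N → Fin L × Fin K) → ℝ := fun μ A' =>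
    if A * ((univ.filter fun i => (A' i).2 = μ).card : ℝ) <
        ((univ.filter fun i => A' i = (α, μ)).card : ℝ) then 1 else 0 with hI
  have hprodnn : ∀ A' : Fin N → Fin L × Fin K, 0 ≤ ∏ i, p (A' i) :=
    fun A' => Finset.prod_nonneg fun i _ => hp _
  have hInn : ∀ (μ : Fin K) (A' : Fin N → Fin L × Fin K), 0 ≤ I μ A' := by
    intro μ A'
    simp only [hI]
    split_ifs <;> norm_num
  have hIle : ∀ (μ : Fin K) (A' : Fin N → Fin L × Fin K), I μ A' ≤ 1 := by
    intro μ A'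
    simp only [hI]
    split_ifs <;> norm_num
  -- Step 1: union bound
  have step1 : δ ≤ ∑ μ, ∑ A' : Fin N → Fin L × Fin K, (∏ i, p (A' i)) * I μ A' := by
    rw [hδ, Finset.sum_comm]
    apply Finset.sum_le_sum
    intro A' _
    rw [← Finset.mul_sum]
    apply mul_le_mul_of_nonneg_left _ (hprodnn A')
    by_cases h : ∃ μ : Fin K,
        A * ((univ.filter fun i => (A' i).2 = μ).card : ℝ) <
          ((univ.filter fun i => A' i = (α, μ)).card : ℝ)
    · rw [if_pos h]
      obtain ⟨μ₀, hμ₀⟩ := h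
      have h1 : I μ₀ A' = 1 := by simp only [hI]; rw [if_pos hμ₀]
      calc (1 : ℝ) = I μ₀ A' := h1.symm
        _ ≤ ∑ μ, I μ A' := Finset.single_le_sum (fun μ _ => hInn μ A') (mem_univ μ₀)
    · rw [if_neg h]
      exact Finset.sum_nonneg fun μ _ => hInn μ A'
  refine step1.trans (Finset.sum_le_sum fun μ _ => ?_)
  -- Step 2: per-committee Chernoff bound
  have hPm := hPpos μ
  have hq0 : 0 ≤ q μ := by rw [hq]; exact div_nonneg (hp _) hPm.le
  have hqA' := hqA μ
  have hpaq : p (α, μ) = q μ * P μ := by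
    rw [hq]; field_simp
  rcases hq0.lt_or_eq with hqpos | hqzero
  · -- main case: 0 < q μ
    have hq1 : q μ < 1 := hqA'.trans hA1
    set lam := Real.log (A * (1 - q μ) / (q μ * (1 - A))) with hlamdef
    have hrpos : 0 < A * (1 - q μ) / (q μ * (1 - A)) :=
      div_pos (mul_pos hA0 (by linarith)) (mul_pos hqpos (by linarith))
    have hr1 : 1 ≤ A * (1 - q μ) / (q μ * (1 - A)) := by
      rw [le_div_iff₀ (mul_pos hqpos (by linarith))]
      nlinarith
    have hlam : 0 ≤ lam := Real.log_nonneg hr1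
    set g : Fin L × Fin K → ℝ := fun x => p x *
        Real.exp (lam * ((if x = (α, μ) then (1:ℝ) else 0) -
          A * (if x.2 = μ then (1:ℝ) else 0))) with hg
    have hg0 : ∀ x, 0 ≤ g x := fun x => mul_nonneg (hp x) (Real.exp_nonneg _)
    -- pointwise Chernoff
    have hpt : ∀ A' : Fin N → Fin L × Fin K,
        (∏ i, p (A' i)) * I μ A' ≤ ∏ i, g (A' i) := by
      intro A'
      have hprodg : ∏ i, g (A' i) = (∏ i, p (A' i)) *
          Real.exp (lam * (((univ.filter fun i => A' i = (α, μ)).card : ℝ) -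
            A * ((univ.filter fun i => (A' i).2 = μ).card : ℝ))) := by
        rw [hg]
        rw [Finset.prod_mul_distrib, ← Real.exp_sum]
        congr 2
        rw [← Finset.mul_sum, Finset.sum_sub_distrib, ← Finset.mul_sum,
          Finset.sum_boole, Finset.sum_boole]
      rw [hprodg]
      apply mul_le_mul_of_nonneg_left _ (hprodnn A')
      by_cases hc : A * ((univ.filter fun i => (A' i).2 = μ).card : ℝ) <
          ((univ.filter fun i => A' i = (α, μ)).card : ℝ)
      · have h1 : I μ A' = 1 := by simp only [hI]; rw [if_pos hc]
        rw [h1]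
        apply Real.one_le_exp
        have : (0:ℝ) ≤ ((univ.filter fun i => A' i = (α, μ)).card : ℝ) -
            A * ((univ.filter fun i => (A' i).2 = μ).card : ℝ) := by linarith
        positivity
      · have h1 : I μ A' = 0 := by simp only [hI]; rw [if_neg hc]
        rw [h1]
        positivity
    have hfac : ∑ A' : Fin N → Fin L × Fin K, ∏ i, g (A' i) = (∑ x, g x) ^ N :=
      (Fintype.sum_pow g N).symm
    -- compute the per-node expectation
    set e1 := Real.exp (lam * (1 - A)) with he1
    set e2 := Real.exp (-(lam * A)) with he2
    have hgx : ∀ x, g x = p x + (if x.2 = μ then (e2 - 1) * p x else 0) +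
        (if x = (α, μ) then (e1 - e2) * p x else 0) := by
      intro x
      by_cases h1 : x = (α, μ)
      · have h2 : x.2 = μ := by rw [h1]
        simp only [hg, h1, h2, if_pos rfl, if_pos]
        rw [he1]; ring_nf
      · by_cases h2 : x.2 = μ
        · simp only [hg, if_neg h1, if_pos h2]
          rw [he2]; ring_nf
        · simp only [hg, if_neg h1, if_neg h2]
          norm_num
    have hsum2 : ∀ c : ℝ, ∑ x : Fin L × Fin K, (if x.2 = μ then c * p x else 0) = c * P μ := by
      intro c
      rw [Fintype.sum_prod_type, hP, Finset.mul_sum]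
      apply Finset.sum_congr rfl
      intro β _
      simp
    have hsum3 : ∀ c : ℝ, ∑ x : Fin L × Fin K, (if x = (α, μ) then c * p x else 0)
        = c * p (α, μ) := by
      intro c
      rw [Finset.sum_ite_eq' univ (α, μ) (fun x => c * p x)]
      simp
    have hgsum : ∑ x, g x = 1 + (e2 - 1) * P μ + (e1 - e2) * p (α, μ) := by
      simp_rw [hgx]
      rw [Finset.sum_add_distrib, Finset.sum_add_distrib, hsum, hsum2, hsum3]
    -- optimal value of the tilt
    have hA0' : A ≠ 0 := ne_of_gt hA0
    have h1A : (0:ℝ) < 1 - A := by linarith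
    have h1q : (0:ℝ) < 1 - q μ := by linarith
    have hlam_split : lam = Real.log (A / q μ) + Real.log ((1 - q μ) / (1 - A)) := by
      rw [hlamdef, ← Real.log_mul (by positivity) (by positivity)]
      congr 1
      field_simp
    have hopt : q μ * e1 + (1 - q μ) * e2 = Real.exp (-KL A (q μ)) := by
      have key : q μ * e1 + (1 - q μ) * e2 = e2 * ((1 - q μ) / (1 - A)) := by
        have hexplam : Real.exp lam = A * (1 - q μ) / (q μ * (1 - A)) :=
          Real.exp_log hrpos
        have he1e2 : e1 = Real.exp lam * e2 := by
          rw [he1, he2, ← Real.exp_add]; ring_nf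
        rw [he1e2, hexplam]
        field_simp
        ring
      rw [key, he2, ← Real.exp_log (show (0:ℝ) < (1 - q μ) / (1 - A) by positivity),
        ← Real.exp_add]
      congr 1
      rw [KL, hlam_split]
      have h1 : Real.log ((1 - A) / (1 - q μ)) = -Real.log ((1 - q μ) / (1 - A)) := by
        rw [← Real.log_inv]
        congr 1
        field_simp
      rw [h1]
      ring
    have hbase : ∑ x, g x = 1 - P μ * (1 - Real.exp (-KL A (q μ))) := by
      rw [hgsum, hpaq, ← hopt]; ring
    have hbase0 : 0 ≤ ∑ x, g x := Finset.sum_nonneg fun x _ => hg0 x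
    calc ∑ A' : Fin N → Fin L × Fin K, (∏ i, p (A' i)) * I μ A'
        ≤ ∑ A' : Fin N → Fin L × Fin K, ∏ i, g (A' i) :=
          Finset.sum_le_sum fun A' _ => hpt A'
      _ = (∑ x, g x) ^ N := hfac
      _ ≤ (Real.exp (-(P μ * (1 - Real.exp (-KL A (q μ)))))) ^ N := by
          apply pow_le_pow_left₀ hbase0
          rw [hbase]
          linarith [Real.add_one_le_exp (-(P μ * (1 - Real.exp (-KL A (q μ)))))]
      _ = Real.exp (-(N:ℝ) * P μ * (1 - Real.exp (-KL A (q μ)))) := by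
          rw [← Real.exp_nat_mul]
          congr 1
          ring
  · -- degenerate case: q μ = 0
    have hqz : q μ = 0 := hqzero.symm
    have hKLneg : KL A (q μ) < 0 := by
      rw [hqz, KL]
      simp only [div_zero, Real.log_zero, mul_zero, sub_zero, div_one, zero_add]
      exact mul_neg_of_pos_of_neg (by linarith) (Real.log_neg (by linarith) (by linarith))
    have hrhs : 1 ≤ Real.exp (-(N:ℝ) * P μ * (1 - Real.exp (-KL A (q μ)))) := by
      apply Real.one_le_exp
      have h1 : 1 < Real.exp (-KL A (q μ)) := by
        rw [show (1:ℝ) = Real.exp 0 by simp]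
        exact Real.exp_lt_exp.mpr (by linarith)
      have hN1 : (1:ℝ) ≤ (N:ℝ) := by exact_mod_cast hN
      have hkey : 0 ≤ (N:ℝ) * P μ * (Real.exp (-KL A (q μ)) - 1) :=
        mul_nonneg (mul_nonneg (by linarith) hPm.le) (by linarith)
      nlinarith
    calc ∑ A' : Fin N → Fin L × Fin K, (∏ i, p (A' i)) * I μ A'
        ≤ ∑ A' : Fin N → Fin L × Fin K, ∏ i, p (A' i) := by
          apply Finset.sum_le_sum
          intro A' _
          calc (∏ i, p (A' i)) * I μ A' ≤ (∏ i, p (A' i)) * 1 :=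
                mul_le_mul_of_nonneg_left (hIle μ A') (hprodnn A')
            _ = ∏ i, p (A' i) := mul_one _
      _ = (∑ x, p x) ^ N := (Fintype.sum_pow p N).symm
      _ = 1 := by rw [hsum, one_pow]
      _ ≤ _ := hrhs
end

section
/- Let P, A ∈ (0,1) with P < A, let K ≥ 1 be an integer, δ ∈ (0,1), and let n ≥ 1 be an integer with Q_n = (⌊A·n⌋ + 1)/n < 1 (note A < Q_n). If n ≥ −log(1 − (1 − δ)^{1/K}) / D(A‖P), then the failure-probability upper bound satisfies 1 − (1 − exp(−n · D(Q_n‖P)))^K ≤ δ. In particular any committee size n exceeding −log(1 − (1 − δ)^{1/K}) / D(A‖P) guarantees failure probability at most δ. -/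
/-!
As a function of `q`, `D(q‖P)` is `-binEntropy q` plus an affine function, so its derivative
`log (q / P) - log ((1 - q) / (1 - P))` is positive for `P < q < 1`: the divergence is strictly
increasing on `[P, 1]`. Since `P < A < Q_n`, this gives `0 < D(A‖P) ≤ D(Q_n‖P)`, and the hypothesis on
`n` yields `exp (-n D(Q_n‖P)) ≤ 1 - (1 - δ)^{1/K}`; raising `1 - exp (-n D(Q_n‖P))` to the `K`-th
power finishes the proof.
-/

open Real

lemma KL_eq_neg_binEntropy {p : ℝ} (hp₀ : p ≠ 0) (hp₁ : p ≠ 1) (q : ℝ) :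
    KL q p = -binEntropy q - q * log p - (1 - q) * log (1 - p) := by
  have hp₁' : 1 - p ≠ 0 := sub_ne_zero.2 hp₁.symm
  rcases eq_or_ne q 0 with rfl | hq₀
  · simp [KL, binEntropy]
  rcases eq_or_ne q 1 with rfl | hq₁
  · simp [KL, binEntropy]
  rw [KL, binEntropy, log_div hq₀ hp₀, log_div (sub_ne_zero.2 hq₁.symm) hp₁', log_inv, log_inv]
  ring

lemma KL_self {p : ℝ} (hp₀ : 0 < p) (hp₁ : p < 1) : KL p p = 0 := by
  simp [KL, div_self hp₀.ne', div_self (sub_pos.2 hp₁).ne']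

lemma KL_strictMonoOn {p : ℝ} (hp₀ : 0 < p) (hp₁ : p < 1) :
    StrictMonoOn (fun q => KL q p) (Set.Icc p 1) := by
  have hKL : (fun q => KL q p) = fun q => -binEntropy q - q * log p - (1 - q) * log (1 - p) :=
    funext (KL_eq_neg_binEntropy hp₀.ne' hp₁.ne)
  rw [hKL]
  refine strictMonoOn_of_deriv_pos (convex_Icc p 1) (by fun_prop) fun q hq => ?_
  rw [interior_Icc] at hq
  obtain ⟨hpq, hq₁⟩ := hq
  have hderiv : HasDerivAt (fun q => -binEntropy q - q * log p - (1 - q) * log (1 - p))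
      (-(log (1 - q) - log q) - log p + log (1 - p)) q :=
    (((hasDerivAt_binEntropy (hp₀.trans hpq).ne' hq₁.ne).neg.sub
      ((hasDerivAt_id q).mul_const (log p))).sub
      (((hasDerivAt_id q).const_sub 1).mul_const (log (1 - p)))).congr_deriv (by ring)
  rw [hderiv.deriv]
  have hlog₀ : log p < log q := log_lt_log hp₀ hpq
  have hlog₁ : log (1 - q) < log (1 - p) := log_lt_log (by linarith) (by linarith)
  linarith

lemma KL_pos_of_lt {p q : ℝ} (hp₀ : 0 < p) (hpq : p < q) (hq₁ : q ≤ 1) : 0 < KL q p := by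
  have hp₁ : p < 1 := hpq.trans_le hq₁
  simpa [KL_self hp₀ hp₁] using
    KL_strictMonoOn hp₀ hp₁ (Set.left_mem_Icc.2 hp₁.le) ⟨hpq.le, hq₁⟩ hpq

lemma KL_le_KL {p q q' : ℝ} (hp₀ : 0 < p) (hpq : p ≤ q) (hqq' : q ≤ q') (hq'₁ : q' < 1) :
    KL q p ≤ KL q' p :=
  (KL_strictMonoOn hp₀ (hpq.trans_lt (hqq'.trans_lt hq'₁))).monotoneOn
    ⟨hpq, hqq'.trans hq'₁.le⟩ ⟨hpq.trans hqq', hq'₁.le⟩ hqq'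

lemma lt_natFloor_mul_add_one_div (a : ℝ) {n : ℕ} (hn : 0 < n) :
    a < ((Nat.floor (a * n) : ℝ) + 1) / n := by
  rw [lt_div_iff₀ (Nat.cast_pos.2 hn)]
  exact Nat.lt_floor_add_one _

lemma exp_neg_mul_le_of_neg_log_div_le {t d D n : ℝ} (ht : 0 < t) (hd : 0 < d) (hdD : d ≤ D)
    (hn : 0 ≤ n) (h : -log t / d ≤ n) : exp (-n * D) ≤ t := by
  have hlog : -log t ≤ n * D :=
    calc -log t ≤ n * d := by rwa [div_le_iff₀ hd] at h
      _ ≤ n * D := mul_le_mul_of_nonneg_left hdD hn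
  calc exp (-n * D) ≤ exp (log t) := exp_le_exp.2 (by linarith)
    _ = t := exp_log ht

lemma one_sub_pow_le_of_rpow_inv_le {δ x : ℝ} {K : ℕ} (hK : K ≠ 0) (hδ : δ ≤ 1)
    (hx : (1 - δ) ^ (K⁻¹ : ℝ) ≤ x) : 1 - x ^ K ≤ δ := by
  have hroot : 0 ≤ (1 - δ) ^ (K⁻¹ : ℝ) := rpow_nonneg (sub_nonneg.2 hδ) _
  have := pow_le_pow_left₀ hroot hx K
  rw [rpow_inv_natCast_pow (sub_nonneg.2 hδ) hK] at this
  linarith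

theorem stmt_13_general (P A : ℝ) (hP : P ∈ Set.Ioo (0 : ℝ) 1)
    (hPA : P < A) (K : ℕ) (hK : 1 ≤ K) (δ : ℝ) (hδ : δ ∈ Set.Ioo (0 : ℝ) 1)
    (n : ℕ) (hn : 1 ≤ n)
    (Qn : ℝ) (hQn : Qn = ((Nat.floor (A * n) : ℝ) + 1) / (n : ℝ)) (hQn1 : Qn < 1)
    (h : -Real.log (1 - (1 - δ) ^ ((1 : ℝ) / K)) / KL A P ≤ (n : ℝ)) :
    1 - (1 - Real.exp (-(n : ℝ) * KL Qn P)) ^ K ≤ δ := by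
  obtain ⟨hP₀, -⟩ := hP
  obtain ⟨hδ₀, hδ₁⟩ := hδ
  have hAQ : A < Qn := hQn ▸ lt_natFloor_mul_add_one_div A hn
  have hKL_pos : 0 < KL A P := KL_pos_of_lt hP₀ hPA (hAQ.trans hQn1).le
  have hKL_le : KL A P ≤ KL Qn P := KL_le_KL hP₀ hPA.le hAQ.le hQn1
  rw [one_div] at h
  have hroot : (1 - δ) ^ (K⁻¹ : ℝ) < 1 :=
    rpow_lt_one (by linarith) (by linarith) (by positivity)
  have hexp : exp (-(n : ℝ) * KL Qn P) ≤ 1 - (1 - δ) ^ (K⁻¹ : ℝ) :=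
    exp_neg_mul_le_of_neg_log_div_le (sub_pos.2 hroot) hKL_pos hKL_le n.cast_nonneg h
  exact one_sub_pow_le_of_rpow_inv_le (by omega) hδ₁.le (by linarith)

/-- any committee size n of at least −log(1−(1−δ)^{1/K})/D(A‖P)
guarantees that the failure-probability upper bound 1−(1−e^{−n·D(Q_n‖P)})^K is
at most δ. -/
theorem stmt_13 (P A : ℝ) (hP : P ∈ Set.Ioo (0 : ℝ) 1) (hA : A ∈ Set.Ioo (0 : ℝ) 1)
    (hPA : P < A) (K : ℕ) (hK : 1 ≤ K) (δ : ℝ) (hδ : δ ∈ Set.Ioo (0 : ℝ) 1)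
    (n : ℕ) (hn : 1 ≤ n)
    (Qn : ℝ) (hQn : Qn = ((Nat.floor (A * n) : ℝ) + 1) / (n : ℝ)) (hQn1 : Qn < 1)
    (h : -Real.log (1 - (1 - δ) ^ ((1 : ℝ) / K)) / KL A P ≤ (n : ℝ)) :
    1 - (1 - Real.exp (-(n : ℝ) * KL Qn P)) ^ K ≤ δ :=
  stmt_13_general P A hP hPA K hK δ hδ n hn Qn hQn hQn1 h
end
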